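/- Let n ≥ 2, let S_j = (x_j, y_j) ∈ ℝ² for j = 1,…,n with x_1 ≤ x_j for all j and x_1 < x_j for at least one j, and let δ_1,…,δ_n > 0. Then the pivot point P_1 = (x̃_1, ỹ_1) of S_1, where x̃_1 = x_1 + (Σ_{j=1}^n δ_j(x_j − x_1)²)/(Σ_{j=1}^n δ_j(x_j − x_1)) and ỹ_1 = y_1 + (Σ_{j=1}^n δ_j(x_j − x_1)(y_j − y_1))/(Σ_{j=1}^n δ_j(x_j − x_1)), lies in the convex hull of {S_2,…,S_n}. That is, with n points, the pivot points corresponding to the leftmost point on the x-axis are bounded by the convex hull of the other n − 1 points. -/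

import Mathlib

/-!
Put `w j = δ j * (x j - x i)`. Then `x̃ i - x i` and `ỹ i - y i` are the `w`-weighted means of
`x j - x i` and `y j - y i`, so the pivot point `P i` is the centre of mass of the points `S j`
with weights `w j`. When `S i` is leftmost, these weights are nonnegative, not all zero, and
vanish at `j = i`, so `P i` is a convex combination of the other points.
-/

open Finset

theorem Finset.add_centerMass_sub {ι E : Type*} [AddCommGroup E] [Module ℝ E] (t : Finset ι)
    {w : ι → ℝ} (hw : ∑ i ∈ t, w i ≠ 0) (z : ι → E) (p : E) :
    p + t.centerMass w (fun i => z i - p) = t.centerMass w z := by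
  simp only [centerMass, smul_sub, sum_sub_distrib, ← sum_smul, smul_sub, smul_smul,
    inv_mul_cancel₀ hw, one_smul, add_sub_cancel]

section Pivot

variable {ι : Type*} [Fintype ι]

noncomputable def pivot (x y δ : ι → ℝ) (i : ι) : ℝ × ℝ :=
  (x i + (∑ j, δ j * (x j - x i) ^ 2) / (∑ j, δ j * (x j - x i)),
    y i + (∑ j, δ j * (x j - x i) * (y j - y i)) / (∑ j, δ j * (x j - x i)))

theorem pivot_eq_centerMass (x y δ : ι → ℝ) (i : ι) (h : ∑ j, δ j * (x j - x i) ≠ 0) :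
    pivot x y δ i = univ.centerMass (fun j => δ j * (x j - x i)) (fun j => (x j, y j)) := by
  rw [← univ.add_centerMass_sub h _ (x i, y i)]
  ext <;> simp [pivot, centerMass, Prod.fst_sum, Prod.snd_sum, div_eq_inv_mul, sq, mul_assoc]

theorem pivot_mem_convexHull_of_forall_le (x y δ : ι → ℝ) (i : ι) (hmin : ∀ j, x i ≤ x j)
    (hlt : ∃ j, x i < x j) (hδ : ∀ j, 0 < δ j) :
    pivot x y δ i ∈ convexHull ℝ ((fun j => (x j, y j)) '' {j | j ≠ i}) := by
  classical
  set w : ι → ℝ := fun j => δ j * (x j - x i)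
  have hw_nonneg : ∀ j, 0 ≤ w j := fun j => mul_nonneg (hδ j).le (sub_nonneg.2 (hmin j))
  have hw_pos : 0 < ∑ j, w j := by
    obtain ⟨j, hj⟩ := hlt
    exact sum_pos' (fun j _ => hw_nonneg j) ⟨j, mem_univ j, mul_pos (hδ j) (sub_pos.2 hj)⟩
  have hw_self : w i = 0 := by simp [w]
  have hsum : ∑ j ∈ univ.erase i, w j = ∑ j, w j := sum_erase _ hw_self
  rw [pivot_eq_centerMass x y δ i hw_pos.ne',
    ← centerMass_subset _ (erase_subset i univ) (by simp)]
  exact centerMass_mem_convexHull _ (fun j _ => hw_nonneg j) (hsum ▸ hw_pos)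
    fun j hj => ⟨j, ne_of_mem_erase hj, rfl⟩

end Pivot

theorem stmt_13_general (n : ℕ) (x y δ : Fin (n + 1) → ℝ)
    (hmin : ∀ j, x 0 ≤ x j) (hlt : ∃ j, x 0 < x j)
    (hδ : ∀ j, 0 < δ j) :
    ((x 0 + (∑ j, δ j * (x j - x 0) ^ 2) / (∑ j, δ j * (x j - x 0)),
      y 0 + (∑ j, δ j * (x j - x 0) * (y j - y 0)) /
          (∑ j, δ j * (x j - x 0))) : ℝ × ℝ) ∈
      convexHull ℝ ((fun j => ((x j, y j) : ℝ × ℝ)) '' {j | j ≠ (0 : Fin (n + 1))}) :=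
  pivot_mem_convexHull_of_forall_le x y δ 0 hmin hlt hδ

/-- With n ≥ 2 points whose leftmost point (on the x-axis) is the
first one, and positive weights, the pivot point of the leftmost point lies in
the convex hull of the other n − 1 points. -/
theorem stmt_13 (n : ℕ) (hn : 1 ≤ n) (x y δ : Fin (n + 1) → ℝ)
    (hmin : ∀ j, x 0 ≤ x j) (hlt : ∃ j, x 0 < x j)
    (hδ : ∀ j, 0 < δ j) :
    ((x 0 + (∑ j, δ j * (x j - x 0) ^ 2) / (∑ j, δ j * (x j - x 0)),
      y 0 + (∑ j, δ j * (x j - x 0) * (y j - y 0)) /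
          (∑ j, δ j * (x j - x 0))) : ℝ × ℝ) ∈
      convexHull ℝ ((fun j => ((x j, y j) : ℝ × ℝ)) '' {j | j ≠ (0 : Fin (n + 1))}) :=
  stmt_13_general n x y δ hmin hlt hδ
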